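/- arXiv:2208.05278 — 2 statements merged into one kernel-verified Lean document; each statement's English description precedes it below -/
import Mathlib

section
/- For k_x = 2 and any k_z ≥ 3, the condition k_V > (k_z+1)/2 required by the median-of-medians estimator is implied by the condition C(k_V, 2) > C(k_z, 2)/2 required by the naive median estimator, i.e., if binom(k_V,2) > binom(k_z,2)/2 then k_V > (k_z+1)/2; moreover the converse fails for k_z = 21 with k_V = 12. -/
/-! If `2k ≤ n + 1` then `k(k-1) ≤ (n+1)(n-1)/4 ≤ n(n-1)/2`, the last step being `(n-1)² ≥ 0`.
So more than half of the `C(n,2)` pairs can come from `k` valid instruments only when `2k > n + 1`. -/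

theorem Nat.two_mul_choose_two_le_choose_two {n k : ℕ} (h : 2 * k ≤ n + 1) :
    2 * k.choose 2 ≤ n.choose 2 := by
  obtain _ | k := k
  · simp
  have hk : (2 * (k + 1) : ℝ) ≤ n + 1 := by exact_mod_cast h
  suffices (2 * (k + 1).choose 2 : ℝ) ≤ n.choose 2 by exact_mod_cast this
  rw [Nat.cast_choose_two, Nat.cast_choose_two]
  push_cast
  -- with `d = n + 1 - 2(k+1) ≥ 0`: `n(n-1)/2 - (k+1)k = k² + d(2k+n)/2`
  nlinarith [mul_nonneg (sub_nonneg.2 hk) (by positivity : (0 : ℝ) ≤ 2 * k + n),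
    sq_nonneg (k : ℝ)]

theorem Nat.lt_two_mul_of_choose_two_lt_two_mul_choose_two {n k : ℕ}
    (h : n.choose 2 < 2 * k.choose 2) : n + 1 < 2 * k := by
  by_contra! hk
  exact h.not_ge (Nat.two_mul_choose_two_le_choose_two hk)

theorem naive_median_condition_implies_mm_condition :
    (∀ kz kV : ℕ, 3 ≤ kz → kV ≤ kz →
      (Nat.choose kV 2 : ℝ) > (Nat.choose kz 2 : ℝ) / 2 →
      (kV : ℝ) > ((kz : ℝ) + 1) / 2) ∧
    ((12 : ℝ) > ((21 : ℝ) + 1) / 2 ∧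
      ¬ ((Nat.choose 12 2 : ℝ) > (Nat.choose 21 2 : ℝ) / 2)) := by
  refine ⟨fun kz kV _ _ h => ?_, by norm_num, by norm_num [Nat.choose]⟩
  have hpairs : kz.choose 2 < 2 * kV.choose 2 := by
    have : (kz.choose 2 : ℝ) < 2 * kV.choose 2 := by linarith
    exact_mod_cast this
  have hV : ((kz + 1 : ℕ) : ℝ) < (2 * kV : ℕ) := by
    exact_mod_cast Nat.lt_two_mul_of_choose_two_lt_two_mul_choose_two hpairs
  push_cast at hV
  linarith
end

section
/- Let J be a finite index set partitioned into V and A with |V| > |J|/2. Suppose for j ∈ V, W_{n,j} is tight (O_p(1)), and for j ∈ A, W_{n,j} = √n·γ_j + O_p(1) with γ_j ≠ 0 (so |W_{n,j}| →_p ∞). Then with probability tending to one the median of {W_{n,j}}_{j∈J} lies between the minimum and maximum of {W_{n,j}}_{j∈V}, and hence the median is O_p(1). -/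
open MeasureTheory

noncomputable def median {n : ℕ} (v : Fin n → ℝ) : ℝ :=
  if h : n = 0 then 0
  else if n % 2 = 1 then
    v (Tuple.sort v ⟨n / 2, Nat.div_lt_self (Nat.pos_of_ne_zero h) one_lt_two⟩)
  else
    (v (Tuple.sort v ⟨n / 2 - 1,
        lt_of_le_of_lt (Nat.sub_le _ _) (Nat.div_lt_self (Nat.pos_of_ne_zero h) one_lt_two)⟩)
     + v (Tuple.sort v ⟨n / 2, Nat.div_lt_self (Nat.pos_of_ne_zero h) one_lt_two⟩)) / 2

/-!
More than half of the coordinates lie in `V`, so at least `#V > p / 2` of all the values are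
`≤ max_V` and at least `#V` are `≥ min_V`; hence every middle order statistic, and so the median,
lies in `[min_V, max_V]` for every `n` and every `ω`. In particular
`|median| ≤ max_{j ∈ V} |W n j|`, and a maximum of finitely many sequences bounded in probability
is bounded in probability by a union bound.
-/

open Finset

namespace Tuple

variable {α : Type*} [LinearOrder α] {n : ℕ} (v : Fin n → α)

theorem card_filter_comp_sort (P : α → Prop) [DecidablePred P] :
    #{i | P (v (sort v i))} = #{i | P (v i)} :=
  card_equiv (sort v) (by simp)

theorem apply_sort_le_of_lt_card {b : α} {k : Fin n} (hk : k < #{i | v i ≤ b}) :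
    v (sort v k) ≤ b := by
  rw [← card_filter_comp_sort v (· ≤ b)] at hk
  exact (lt_card_le_iff_apply_le_of_monotone (monotone_sort v)).mp hk

theorem le_apply_sort_of_le_add_card {a : α} {k : Fin n} (hk : n ≤ k + #{i | a ≤ v i}) :
    a ≤ v (sort v k) := by
  have hsplit := card_filter_add_card_filter_not (s := univ) (fun i => v (sort v i) < a)
  rw [card_univ, Fintype.card_fin] at hsplit
  have hge : #{i | ¬v (sort v i) < a} = #{i | a ≤ v i} := by
    simp_rw [not_lt]; exact card_filter_comp_sort v (a ≤ ·)
  refine not_lt.mp fun hlt => ?_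
  have hlt' : k < #{i | v (sort v i) < a} :=
    (lt_card_lt_iff_apply_lt_of_monotone (monotone_sort v)).mpr hlt
  omega

theorem apply_sort_mem_Icc_inf'_sup' {S : Finset (Fin n)} (hS : S.Nonempty) (k : Fin n)
    (hk : k < #S) (hk' : n ≤ k + #S) :
    v (sort v k) ∈ Set.Icc (S.inf' hS v) (S.sup' hS v) := by
  constructor
  · refine le_apply_sort_of_le_add_card v (hk'.trans (Nat.add_le_add_left (card_le_card ?_) _))
    intro i hi
    simpa only [mem_filter, mem_univ, true_and] using inf'_le v hi
  · refine apply_sort_le_of_lt_card v (hk.trans_le (card_le_card ?_))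
    intro i hi
    simpa only [mem_filter, mem_univ, true_and] using le_sup' v hi

end Tuple

theorem median_mem_Icc_inf'_sup' {n : ℕ} {S : Finset (Fin n)} (hS : S.Nonempty)
    (hmaj : n < 2 * #S) (v : Fin n → ℝ) :
    median v ∈ Set.Icc (S.inf' hS v) (S.sup' hS v) := by
  have hcard : #S ≤ n := by simpa only [Fintype.card_fin] using S.card_le_univ
  have hn : n ≠ 0 := by have := hS.card_pos; omega
  have hmid (k : ℕ) (hk : k < #S) (hk' : n ≤ k + #S) :=
    Tuple.apply_sort_mem_Icc_inf'_sup' v hS ⟨k, by omega⟩ hk hk'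
  unfold median
  rw [dif_neg hn]
  split_ifs with hodd
  · exact hmid (n / 2) (by omega) (by omega)
  · have hlo := hmid (n / 2 - 1) (by omega) (by omega)
    have hhi := hmid (n / 2) (by omega) (by omega)
    constructor <;> linarith [hlo.1, hlo.2, hhi.1, hhi.2]

theorem Finset.abs_le_sup'_abs_of_mem_Icc {ι α : Type*} [AddCommGroup α] [LinearOrder α]
    [IsOrderedAddMonoid α] {S : Finset ι} (hS : S.Nonempty) {v : ι → α} {x : α}
    (hx : x ∈ Set.Icc (S.inf' hS v) (S.sup' hS v)) :
    |x| ≤ S.sup' hS (fun j => |v j|) := by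
  obtain ⟨i, hi, hinf⟩ := exists_mem_eq_inf' hS v
  obtain ⟨j, hj, hsup⟩ := exists_mem_eq_sup' hS v
  refine abs_le'.mpr ⟨?_, ?_⟩
  · calc x ≤ v j := hsup ▸ hx.2
      _ ≤ |v j| := le_abs_self _
      _ ≤ _ := le_sup' (fun j => |v j|) hj
  · calc -x ≤ -v i := neg_le_neg (hinf ▸ hx.1)
      _ ≤ |v i| := neg_le_abs _
      _ ≤ _ := le_sup' (fun j => |v j|) hi

namespace MeasureTheory

def BoundedInProbability {Ω : Type*} [MeasurableSpace Ω] (μ : Measure Ω)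
    (X : ℕ → Ω → ℝ) : Prop :=
  ∀ ε : ℝ, 0 < ε → ∃ M : ℝ, ∀ n : ℕ, μ.real {ω | M < |X n ω|} < ε

namespace BoundedInProbability

variable {Ω : Type*} [MeasurableSpace Ω] {μ : Measure Ω} [IsFiniteMeasure μ]

theorem mono {X Y : ℕ → Ω → ℝ} (hX : BoundedInProbability μ X)
    (hYX : ∀ n ω, |Y n ω| ≤ |X n ω|) : BoundedInProbability μ Y := by
  intro ε hε
  obtain ⟨M, hM⟩ := hX ε hε
  refine ⟨M, fun n => (measureReal_mono fun ω hω => ?_).trans_lt (hM n)⟩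
  exact lt_of_lt_of_le hω (hYX n ω)

theorem finset_sup'_abs {ι : Type*} {S : Finset ι} (hS : S.Nonempty) {X : ι → ℕ → Ω → ℝ}
    (hX : ∀ j ∈ S, BoundedInProbability μ (X j)) :
    BoundedInProbability μ (fun n ω => S.sup' hS (fun j => |X j n ω|)) := by
  intro ε hε
  have hεS : 0 < ε / #S := div_pos hε (by exact_mod_cast hS.card_pos)
  choose! M hM using fun j hj => hX j hj (ε / #S) hεS
  refine ⟨S.sup' hS M, fun n => ?_⟩
  have hsub : {ω | S.sup' hS M < |S.sup' hS (fun j => |X j n ω|)|} ⊆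
      ⋃ j ∈ S, {ω | M j < |X j n ω|} := by
    intro ω hω
    have hnonneg : 0 ≤ S.sup' hS (fun j => |X j n ω|) :=
      le_sup'_of_le _ hS.choose_spec (abs_nonneg _)
    rw [Set.mem_ofPred_eq, abs_of_nonneg hnonneg, lt_sup'_iff] at hω
    obtain ⟨j, hj, hlt⟩ := hω
    exact Set.mem_biUnion hj ((le_sup' M hj).trans_lt hlt)
  calc μ.real {ω | S.sup' hS M < |S.sup' hS (fun j => |X j n ω|)|}
      ≤ ∑ j ∈ S, μ.real {ω | M j < |X j n ω|} :=
        (measureReal_mono hsub (measure_ne_top μ _)).trans (measureReal_biUnion_finset_le S _)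
    _ < ∑ _j ∈ S, ε / #S := sum_lt_sum_of_nonempty hS fun j hj => hM j hj n
    _ = ε := by rw [sum_const, nsmul_eq_mul]; field_simp

end BoundedInProbability

end MeasureTheory

theorem median_between_valid_extremes_general {Ω : Type*} [MeasurableSpace Ω]
    (μ : Measure Ω) [IsProbabilityMeasure μ] {p : ℕ}
    (V : Finset (Fin p))
    (hmaj : (V.card : ℝ) > (p : ℝ) / 2) (hVne : V.Nonempty)
    (W : ℕ → Fin p → Ω → ℝ)
    (htightV : ∀ j ∈ V, ∀ ε : ℝ, 0 < ε → ∃ M : ℝ, ∀ n : ℕ,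
      (μ {ω | M < |W n j ω|}).toReal < ε) :
    Filter.Tendsto
      (fun n => (μ {ω | V.inf' hVne (fun j => W n j ω) ≤ median (fun j => W n j ω)
          ∧ median (fun j => W n j ω) ≤ V.sup' hVne (fun j => W n j ω)}).toReal)
      Filter.atTop (nhds 1)
    ∧ (∀ ε : ℝ, 0 < ε → ∃ M : ℝ, ∀ n : ℕ,
        (μ {ω | M < |median (fun j => W n j ω)|}).toReal < ε) := by
  have hmaj' : p < 2 * V.card := by exact_mod_cast (by linarith : (p : ℝ) < 2 * V.card)
  have hmed (n : ℕ) (ω : Ω) := median_mem_Icc_inf'_sup' hVne hmaj' (fun j => W n j ω)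
  refine ⟨?_, ?_⟩
  · simp only [Set.mem_Icc.mp (hmed _ _), and_self, Set.ofPred_true, measure_univ,
      ENNReal.toReal_one, tendsto_const_nhds]
  · exact (BoundedInProbability.finset_sup'_abs hVne htightV).mono fun n ω =>
      (abs_le_sup'_abs_of_mem_Icc hVne (hmed n ω)).trans (le_abs_self _)

theorem median_between_valid_extremes {Ω : Type*} [MeasurableSpace Ω]
    (μ : Measure Ω) [IsProbabilityMeasure μ] {p : ℕ} (hp : 0 < p)
    (V A : Finset (Fin p)) (hVA : Disjoint V A) (hunion : V ∪ A = Finset.univ)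
    (hmaj : (V.card : ℝ) > (p : ℝ) / 2) (hVne : V.Nonempty)
    (W : ℕ → Fin p → Ω → ℝ) (γ : Fin p → ℝ) (R : ℕ → Fin p → Ω → ℝ)
    (htightV : ∀ j ∈ V, ∀ ε : ℝ, 0 < ε → ∃ M : ℝ, ∀ n : ℕ,
      (μ {ω | M < |W n j ω|}).toReal < ε)
    (hA : ∀ j ∈ A, γ j ≠ 0 ∧
      (∀ n : ℕ, ∀ ω : Ω, W n j ω = Real.sqrt n * γ j + R n j ω) ∧
      (∀ ε : ℝ, 0 < ε → ∃ M : ℝ, ∀ n : ℕ,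
        (μ {ω | M < |R n j ω|}).toReal < ε)) :
    Filter.Tendsto
      (fun n => (μ {ω | V.inf' hVne (fun j => W n j ω) ≤ median (fun j => W n j ω)
          ∧ median (fun j => W n j ω) ≤ V.sup' hVne (fun j => W n j ω)}).toReal)
      Filter.atTop (nhds 1)
    ∧ (∀ ε : ℝ, 0 < ε → ∃ M : ℝ, ∀ n : ℕ,
        (μ {ω | M < |median (fun j => W n j ω)|}).toReal < ε) :=
  median_between_valid_extremes_general μ V hmaj hVne W htightV
end
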